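/- arXiv:2203.03318 — 4 statements merged into one kernel-verified Lean document; each statement's English description precedes it below -/
import Mathlib

section
/- For every n ≥ 0, the identity (x−c)² P_n^{[2]}(x) = P_{n+2}(x) − d_n P_{n+1}(x) + e_n P_n(x) holds as an identity of polynomials. -/
open MeasureTheory Polynomial

/-- Squared norm `‖Q‖_μ² = ∫ Q(x)² dμ`. -/
noncomputable def nrmSq (μ : Measure ℝ) (Q : Polynomial ℝ) : ℝ := ∫ x, Q.eval x ^ 2 ∂μ

/-- Squared norm in the 2-iterated Christoffel measure `(x-c)² dμ`. -/
noncomputable def nrmSq2 (μ : Measure ℝ) (c : ℝ) (Q : Polynomial ℝ) : ℝ :=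
  ∫ x, Q.eval x ^ 2 * (x - c) ^ 2 ∂μ

/-- Sobolev-type inner product `⟨f,g⟩_S = ∫ f g dμ + M f(c) g(c) + N f'(c) g'(c)`. -/
noncomputable def ipS (μ : Measure ℝ) (c M N : ℝ) (f g : Polynomial ℝ) : ℝ :=
  (∫ x, f.eval x * g.eval x ∂μ) + M * (f.eval c * g.eval c)
    + N * ((derivative f).eval c * (derivative g).eval c)

/-- Leading coefficient `r_n = 1/‖P_n‖_μ` of the orthonormal polynomial `p_n`. -/
noncomputable def rC (μ : Measure ℝ) (P : ℕ → Polynomial ℝ) (n : ℕ) : ℝ :=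
  1 / Real.sqrt (nrmSq μ (P n))

/-- Leading coefficient `r_n^{[2]} = 1/‖P_n^{[2]}‖_{[2]}`. -/
noncomputable def r2C (μ : Measure ℝ) (c : ℝ) (P2 : ℕ → Polynomial ℝ) (n : ℕ) : ℝ :=
  1 / Real.sqrt (nrmSq2 μ c (P2 n))

/-- Orthonormal polynomial `p_n = P_n/‖P_n‖_μ`. -/
noncomputable def onP (μ : Measure ℝ) (P : ℕ → Polynomial ℝ) (n : ℕ) : Polynomial ℝ :=
  C (rC μ P n) * P n

/-- Orthonormal polynomial `p_n^{[2]} = P_n^{[2]}/‖P_n^{[2]}‖_{[2]}`. -/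
noncomputable def onP2 (μ : Measure ℝ) (c : ℝ) (P2 : ℕ → Polynomial ℝ) (n : ℕ) : Polynomial ℝ :=
  C (r2C μ c P2 n) * P2 n

/-- Leading coefficient `t_n = 1/‖S_n^{M,N}‖_S` of the Sobolev-type orthonormal polynomial. -/
noncomputable def tC (μ : Measure ℝ) (c M N : ℝ) (S : ℕ → Polynomial ℝ) (n : ℕ) : ℝ :=
  1 / Real.sqrt (ipS μ c M N (S n) (S n))

/-- Sobolev-type orthonormal polynomial `s_n^{M,N} = S_n^{M,N}/‖S_n^{M,N}‖_S`. -/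
noncomputable def sN (μ : Measure ℝ) (c M N : ℝ) (S : ℕ → Polynomial ℝ) (n : ℕ) : Polynomial ℝ :=
  C (tC μ c M N S n) * S n

/-- Diagonal kernel value `K_n(c,c) = Σ_{j=0}^n P_j(c)²/‖P_j‖_μ²`. -/
noncomputable def Kcc (μ : Measure ℝ) (P : ℕ → Polynomial ℝ) (c : ℝ) (n : ℕ) : ℝ :=
  ∑ j ∈ Finset.range (n + 1), (P j).eval c ^ 2 / nrmSq μ (P j)

/-- Kernel `K_n^{(0,j)}(x,c)` as a polynomial in `x`:
`Σ_{k=0}^n (d/dy)^j P_k(y)|_{y=c} · P_k(x)/‖P_k‖_μ²`. -/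
noncomputable def Kpoly (μ : Measure ℝ) (P : ℕ → Polynomial ℝ) (c : ℝ) (n j : ℕ) : Polynomial ℝ :=
  ∑ k ∈ Finset.range (n + 1), C ((derivative^[j] (P k)).eval c / nrmSq μ (P k)) * P k

/-- Mixed derivative of the kernel at the diagonal:
`K_n^{(i,j)}(c,c) = Σ_{k=0}^n P_k^{(i)}(c) P_k^{(j)}(c)/‖P_k‖_μ²`. -/
noncomputable def Kder (μ : Measure ℝ) (P : ℕ → Polynomial ℝ) (c : ℝ) (n i j : ℕ) : ℝ :=
  ∑ k ∈ Finset.range (n + 1),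
    (derivative^[i] (P k)).eval c * (derivative^[j] (P k)).eval c / nrmSq μ (P k)

/-- Connection coefficient `d_n`. -/
noncomputable def dCoef (P : ℕ → Polynomial ℝ) (c : ℝ) (n : ℕ) : ℝ :=
  ((P (n + 2)).eval c * (derivative (P n)).eval c
      - (derivative (P (n + 2))).eval c * (P n).eval c) /
    ((P (n + 1)).eval c * (derivative (P n)).eval c
      - (derivative (P (n + 1))).eval c * (P n).eval c)

/-- Connection coefficient `e_n`. -/
noncomputable def eCoef (P : ℕ → Polynomial ℝ) (c : ℝ) (n : ℕ) : ℝ :=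
  ((P (n + 2)).eval c * (derivative (P (n + 1))).eval c
      - (derivative (P (n + 2))).eval c * (P (n + 1)).eval c) /
    ((P (n + 1)).eval c * (derivative (P n)).eval c
      - (derivative (P (n + 1))).eval c * (P n).eval c)

/-- Connection coefficient `γ_{j,n} = ⟨s_n^{M,N}, p_j^{[2]}⟩_{[2]}`. -/
noncomputable def gamC (μ : Measure ℝ) (c M N : ℝ) (S P2 : ℕ → Polynomial ℝ) (j n : ℕ) : ℝ :=
  ∫ x, (sN μ c M N S n).eval x * (onP2 μ c P2 j).eval x * (x - c) ^ 2 ∂μ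

/-- Jacobi matrix of `μ`: `J(n,m) = ∫ x p_n(x) p_m(x) dμ`. -/
noncomputable def Jmat (μ : Measure ℝ) (P : ℕ → Polynomial ℝ) (n m : ℕ) : ℝ :=
  ∫ x, x * ((onP μ P n).eval x * (onP μ P m).eval x) ∂μ

/-- Jacobi matrix of `(x-c)² dμ`: `J_{[2]}(n,m) = ∫ x p_n^{[2]}(x) p_m^{[2]}(x) (x-c)² dμ`. -/
noncomputable def J2mat (μ : Measure ℝ) (c : ℝ) (P2 : ℕ → Polynomial ℝ) (n m : ℕ) : ℝ :=
  ∫ x, x * ((onP2 μ c P2 n).eval x * (onP2 μ c P2 m).eval x) * (x - c) ^ 2 ∂μ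

/-- Five-diagonal matrix `H(n,m) = ⟨(x-c)² s_n^{M,N}, s_m^{M,N}⟩_S`. -/
noncomputable def Hmat (μ : Measure ℝ) (c M N : ℝ) (S : ℕ → Polynomial ℝ) (n m : ℕ) : ℝ :=
  ipS μ c M N ((X - C c) ^ 2 * sN μ c M N S n) (sN μ c M N S m)

/-- Kronecker delta. -/
noncomputable def kdel (n m : ℕ) : ℝ := if n = m then 1 else 0


/-- Integral of a polynomial against `μ`. -/
noncomputable def iP (μ : Measure ℝ) (q : Polynomial ℝ) : ℝ := ∫ x, q.eval x ∂μ

lemma intPoly (μ : Measure ℝ)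
    (hmom : ∀ n : ℕ, Integrable (fun x : ℝ => x ^ n) μ)
    (q : Polynomial ℝ) : Integrable (fun x => q.eval x) μ := by
  have h : (fun x : ℝ => q.eval x)
      = fun x => ∑ i ∈ Finset.range (q.natDegree + 1), q.coeff i * x ^ i := by
    funext x; exact eval_eq_sum_range x
  rw [h]
  exact integrable_finset_sum _ fun i _ => ((hmom i).const_mul _)

lemma iP_sub (μ : Measure ℝ) (hmom : ∀ n : ℕ, Integrable (fun x : ℝ => x ^ n) μ)
    (p q : Polynomial ℝ) : iP μ (p - q) = iP μ p - iP μ q := by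
  simp only [iP, eval_sub]
  exact integral_sub (intPoly μ hmom p) (intPoly μ hmom q)

lemma iP_Cmul (μ : Measure ℝ) (a : ℝ) (q : Polynomial ℝ) :
    iP μ (C a * q) = a * iP μ q := by
  simp only [iP, eval_mul, eval_C]
  exact integral_const_mul a _

lemma iP_sum (μ : Measure ℝ) (hmom : ∀ n : ℕ, Integrable (fun x : ℝ => x ^ n) μ)
    {ι : Type*} (s : Finset ι) (f : ι → Polynomial ℝ) :
    iP μ (∑ k ∈ s, f k) = ∑ k ∈ s, iP μ (f k) := by
  simp only [iP, eval_finset_sum]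
  exact integral_finset_sum s fun i _ => intPoly μ hmom (f i)

lemma exists_rep (Q : ℕ → Polynomial ℝ) (hm : ∀ n, (Q n).Monic)
    (hd : ∀ n, (Q n).natDegree = n) :
    ∀ (d : ℕ) (q : Polynomial ℝ), q.natDegree ≤ d →
      ∃ f : ℕ → ℝ, q = ∑ k ∈ Finset.range (d + 1), C (f k) * Q k := by
  intro d
  induction d with
  | zero =>
    intro q hq
    refine ⟨fun _ => q.coeff 0, ?_⟩
    have hQ0 : Q 0 = 1 := ((hm 0).natDegree_eq_zero).mp (hd 0)
    rw [eq_C_of_natDegree_le_zero hq]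
    simp [hQ0]
  | succ d ih =>
    intro q hq
    set a := q.coeff (d + 1) with ha
    have hsd : (q - C a * Q (d + 1)).natDegree ≤ d := by
      rw [natDegree_le_iff_coeff_eq_zero]
      intro m hm'
      rcases eq_or_lt_of_le (Nat.succ_le_of_lt hm') with h | h
      · have h1 : (Q (d + 1)).coeff (d + 1) = 1 := by
          have := (hm (d + 1)).coeff_natDegree
          rwa [hd (d + 1)] at this
        simp [coeff_sub, coeff_C_mul, ← h, h1, ha]
      · have h2 : q.coeff m = 0 := coeff_eq_zero_of_natDegree_lt (by omega)
        have h3 : (Q (d + 1)).coeff m = 0 :=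
          coeff_eq_zero_of_natDegree_lt (by rw [hd]; omega)
        simp [coeff_sub, coeff_C_mul, h2, h3]
    obtain ⟨f, hf⟩ := ih (q - C a * Q (d + 1)) hsd
    refine ⟨fun k => if k = d + 1 then a else f k, ?_⟩
    rw [Finset.sum_range_succ]
    have hagree : ∑ k ∈ Finset.range (d + 1),
        C (if k = d + 1 then a else f k) * Q k
        = ∑ k ∈ Finset.range (d + 1), C (f k) * Q k :=
      Finset.sum_congr rfl fun k hk => by
        rw [if_neg (Nat.ne_of_lt (Finset.mem_range.mp hk))]
    rw [hagree, ← hf]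
    show q = q - C a * Q (d + 1)
        + C (if d + 1 = d + 1 then a else f (d + 1)) * Q (d + 1)
    rw [if_pos rfl]
    ring

lemma ortho_lower (μ : Measure ℝ)
    (hmom : ∀ n : ℕ, Integrable (fun x : ℝ => x ^ n) μ) (w : Polynomial ℝ)
    (Q : ℕ → Polynomial ℝ) (hm : ∀ n, (Q n).Monic) (hd : ∀ n, (Q n).natDegree = n)
    (ho : ∀ m n, m ≠ n → iP μ (Q m * Q n * w) = 0) :
    ∀ (n : ℕ) (q : Polynomial ℝ), q.natDegree < n → iP μ (Q n * q * w) = 0 := by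
  intro n q hq
  obtain ⟨f, hf⟩ := exists_rep Q hm hd (n - 1) q (by omega)
  have hn : n - 1 + 1 = n := by omega
  rw [hn] at hf
  have hexp : Q n * q * w = ∑ k ∈ Finset.range n, C (f k) * (Q n * Q k * w) := by
    rw [hf, Finset.mul_sum, Finset.sum_mul]
    exact Finset.sum_congr rfl fun k _ => by ring
  rw [hexp, iP_sum μ hmom]
  refine Finset.sum_eq_zero fun k hk => ?_
  rw [iP_Cmul, ho n k (by have := Finset.mem_range.mp hk; omega), mul_zero]

lemma Pc_ne (μ : Measure ℝ)
    (hmom : ∀ n : ℕ, Integrable (fun x : ℝ => x ^ n) μ)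
    (hpos : ∀ q : Polynomial ℝ, q ≠ 0 → 0 < ∫ x, q.eval x ^ 2 ∂μ)
    (c : ℝ) (hc : ∀ᵐ x ∂μ, c < x)
    (P : ℕ → Polynomial ℝ) (hPm : ∀ n, (P n).Monic) (hPd : ∀ n, (P n).natDegree = n)
    (ho : ∀ m n, m ≠ n → iP μ (P m * P n * 1) = 0) :
    ∀ n, (P n).eval c ≠ 0 := by
  intro n hzero
  obtain ⟨Q, hQ⟩ := dvd_iff_isRoot.mpr hzero
  have hQ0 : Q ≠ 0 := by
    rintro rfl
    rw [mul_zero] at hQ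
    exact (hPm n).ne_zero hQ
  have hdeg : n = 1 + Q.natDegree := by
    rw [← hPd n, hQ, natDegree_mul (X_sub_C_ne_zero c) hQ0, natDegree_X_sub_C]
  have h0 : iP μ (P n * Q * 1) = 0 :=
    ortho_lower μ hmom 1 P hPm hPd ho n Q (by omega)
  have h0' : ∫ x, (x - c) * Q.eval x ^ 2 ∂μ = 0 := by
    rw [← h0]
    unfold iP
    refine integral_congr_ae (.of_forall fun x => ?_)
    simp [hQ]; ring
  have hnn : 0 ≤ᶠ[MeasureTheory.ae μ] fun x => (x - c) * Q.eval x ^ 2 :=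
    hc.mono fun x hx => mul_nonneg (by linarith) (sq_nonneg _)
  have hint : Integrable (fun x => (x - c) * Q.eval x ^ 2) μ := by
    refine (intPoly μ hmom ((X - C c) * (Q * Q))).congr (.of_forall fun x => ?_)
    simp only [eval_mul, eval_sub, eval_X, eval_C]
    ring
  have hae := (integral_eq_zero_iff_of_nonneg_ae hnn hint).mp h0'
  have hQsq : ∀ᵐ x ∂μ, Q.eval x ^ 2 = 0 := by
    filter_upwards [hc, hae] with x hx h
    simp only [Pi.zero_apply] at h
    have hxc : x - c ≠ 0 := by linarith
    exact (mul_eq_zero.mp h).resolve_left hxc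
  have hzero' : ∫ x, Q.eval x ^ 2 ∂μ = 0 := by
    rw [integral_congr_ae (g := fun _ => (0 : ℝ)) (hQsq.mono fun x hx => hx)]
    simp
  exact absurd hzero' (ne_of_gt (hpos Q hQ0))

lemma delta_ne (μ : Measure ℝ)
    (hmom : ∀ n : ℕ, Integrable (fun x : ℝ => x ^ n) μ)
    (hpos : ∀ q : Polynomial ℝ, q ≠ 0 → 0 < ∫ x, q.eval x ^ 2 ∂μ)
    (c : ℝ) (hc : ∀ᵐ x ∂μ, c < x)
    (P : ℕ → Polynomial ℝ) (hPm : ∀ n, (P n).Monic) (hPd : ∀ n, (P n).natDegree = n)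
    (ho : ∀ m n, m ≠ n → iP μ (P m * P n * 1) = 0) :
    ∀ n, (P (n + 1)).eval c * (derivative (P n)).eval c
        - (derivative (P (n + 1))).eval c * (P n).eval c ≠ 0 := by
  intro n h
  set a := (P (n + 1)).eval c with ha
  set b := (P n).eval c with hb'
  have hb : b ≠ 0 := Pc_ne μ hmom hpos c hc P hPm hPd ho n
  set R := C a * P n - C b * P (n + 1) with hR
  have hcoeff : R.coeff (n + 1) = -b := by
    have h1 : (P (n + 1)).coeff (n + 1) = 1 := by
      have := (hPm (n + 1)).coeff_natDegree
      rwa [hPd (n + 1)] at this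
    have h2 : (P n).coeff (n + 1) = 0 :=
      coeff_eq_zero_of_natDegree_lt (by rw [hPd]; omega)
    simp [hR, coeff_sub, coeff_C_mul, h1, h2]
  have hRne : R ≠ 0 := by
    intro h0
    rw [h0] at hcoeff
    simp at hcoeff
    exact hb hcoeff
  have hRdeg_le : R.natDegree ≤ n + 1 := by
    refine le_trans (natDegree_sub_le _ _) (sup_le ?_ ?_)
    · exact le_trans (natDegree_C_mul_le _ _) (by rw [hPd]; omega)
    · exact le_trans (natDegree_C_mul_le _ _) (by rw [hPd])
  have hRc : R.eval c = 0 := by simp [hR, ← ha, ← hb']; ring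
  have hR'c : (derivative R).eval c = 0 := by
    simp only [hR, derivative_sub, derivative_C_mul, eval_sub, eval_mul, eval_C]
    linear_combination h
  obtain ⟨R1, hR1⟩ := dvd_iff_isRoot.mpr hRc
  have hR1c : R1.eval c = 0 := by
    have hder : (derivative R).eval c = R1.eval c := by
      rw [hR1]; simp [derivative_mul]
    rw [← hder, hR'c]
  obtain ⟨Q2, hQ2⟩ := dvd_iff_isRoot.mpr hR1c
  have hRQ : R = (X - C c) ^ 2 * Q2 := by rw [hR1, hQ2]; ring
  have hQ2ne : Q2 ≠ 0 := by
    rintro rfl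
    rw [mul_zero] at hRQ
    exact hRne hRQ
  have hdeg2 : R.natDegree = 2 + Q2.natDegree := by
    rw [hRQ, natDegree_mul (pow_ne_zero 2 (X_sub_C_ne_zero c)) hQ2ne,
      natDegree_pow, natDegree_X_sub_C]
  have hge : n + 1 ≤ R.natDegree :=
    le_natDegree_of_ne_zero (by rw [hcoeff]; exact neg_ne_zero.mpr hb)
  have hQlt : Q2.natDegree < n := by omega
  have h1 : iP μ (P n * Q2 * 1) = 0 :=
    ortho_lower μ hmom 1 P hPm hPd ho n Q2 hQlt
  have h2 : iP μ (P (n + 1) * Q2 * 1) = 0 :=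
    ortho_lower μ hmom 1 P hPm hPd ho (n + 1) Q2 (by omega)
  have hsplit : R * Q2 = C a * (P n * Q2 * 1) - C b * (P (n + 1) * Q2 * 1) := by
    rw [hR]; ring
  have h0 : iP μ (R * Q2) = 0 := by
    rw [hsplit, iP_sub μ hmom, iP_Cmul, iP_Cmul, h1, h2]; ring
  have hposR : 0 < iP μ (R * Q2) := by
    have hne : (X - C c) * Q2 ≠ 0 := mul_ne_zero (X_sub_C_ne_zero c) hQ2ne
    have hp := hpos ((X - C c) * Q2) hne
    have heq : iP μ (R * Q2) = ∫ x, ((X - C c) * Q2).eval x ^ 2 ∂μ := by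
      unfold iP
      refine integral_congr_ae (.of_forall fun x => ?_)
      rw [hRQ]; simp; ring
    rw [heq]; exact hp
  exact absurd h0 (ne_of_gt hposR)

/-- for every `n ≥ 0`,
`(x-c)² P_n^{[2]}(x) = P_{n+2}(x) - d_n P_{n+1}(x) + e_n P_n(x)`. -/
theorem stmt0
    (μ : Measure ℝ) [IsFiniteMeasure μ]
    (hmom : ∀ n : ℕ, Integrable (fun x : ℝ => x ^ n) μ)
    (hpos : ∀ q : Polynomial ℝ, q ≠ 0 → 0 < ∫ x, q.eval x ^ 2 ∂μ)
    (c : ℝ) (hc : ∀ᵐ x ∂μ, c < x)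
    (P : ℕ → Polynomial ℝ) (hPm : ∀ n, (P n).Monic) (hPd : ∀ n, (P n).natDegree = n)
    (hPo : ∀ m n, m ≠ n → ∫ x, (P m).eval x * (P n).eval x ∂μ = 0)
    (P2 : ℕ → Polynomial ℝ) (hP2m : ∀ n, (P2 n).Monic) (hP2d : ∀ n, (P2 n).natDegree = n)
    (hP2o : ∀ m n, m ≠ n → ∫ x, (P2 m).eval x * (P2 n).eval x * (x - c) ^ 2 ∂μ = 0) :
    ∀ n : ℕ,
      (X - C c) ^ 2 * P2 n
        = P (n + 2) - C (dCoef P c n) * P (n + 1) + C (eCoef P c n) * P n := by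
  have hoP : ∀ m k, m ≠ k → iP μ (P m * P k * 1) = 0 := by
    intro m k h
    simpa [iP] using hPo m k h
  have hoP2 : ∀ m k, m ≠ k → iP μ (P2 m * P2 k * (X - C c) ^ 2) = 0 := by
    intro m k h
    simpa [iP] using hP2o m k h
  intro n
  set D := P (n + 2) - (X - C c) ^ 2 * P2 n with hD
  have hmon2 : ((X - C c) ^ 2 * P2 n).Monic := ((monic_X_sub_C c).pow 2).mul (hP2m n)
  have hdeg2 : ((X - C c) ^ 2 * P2 n).natDegree = n + 2 := by
    rw [Monic.natDegree_mul ((monic_X_sub_C c).pow 2) (hP2m n), natDegree_pow,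
      natDegree_X_sub_C, hP2d]
    ring
  have hDdeg : D.natDegree ≤ n + 1 := by
    by_cases h0 : D = 0
    · simp [h0]
    · have hlt : D.degree < ((n + 2 : ℕ) : WithBot ℕ) := by
        have hdd := degree_sub_lt (p := P (n + 2)) (q := (X - C c) ^ 2 * P2 n)
          (by rw [degree_eq_natDegree (hPm _).ne_zero, degree_eq_natDegree hmon2.ne_zero,
            hPd, hdeg2]) (hPm (n + 2)).ne_zero
          (by rw [(hPm _).leadingCoeff, hmon2.leadingCoeff])
        rw [degree_eq_natDegree (hPm (n + 2)).ne_zero, hPd] at hdd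
        exact hdd
      have := (natDegree_lt_iff_degree_lt h0).mpr hlt
      omega
  obtain ⟨f, hf⟩ := exists_rep P hPm hPd (n + 1) D hDdeg
  have hiPk : ∀ k, k < n → iP μ (D * P k) = 0 := by
    intro k hk
    have e1 : iP μ (P (n + 2) * P k * 1) = 0 :=
      ortho_lower μ hmom 1 P hPm hPd hoP (n + 2) (P k) (by rw [hPd]; omega)
    have e2 : iP μ (P2 n * P k * (X - C c) ^ 2) = 0 :=
      ortho_lower μ hmom ((X - C c) ^ 2) P2 hP2m hP2d hoP2 n (P k) (by rw [hPd]; omega)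
    have hsp : D * P k = (P (n + 2) * P k * 1) - (P2 n * P k * (X - C c) ^ 2) := by
      rw [hD]; ring
    rw [hsp, iP_sub μ hmom, e1, e2, sub_zero]
  have hfk : ∀ k, k < n → f k = 0 := by
    intro k hk
    have hDk : iP μ (D * P k) = f k * iP μ (P k * P k) := by
      calc iP μ (D * P k) = ∑ j ∈ Finset.range (n + 2), f j * iP μ (P j * P k) := by
            rw [show D * P k = ∑ j ∈ Finset.range (n + 2), C (f j) * (P j * P k) by
              rw [hf, Finset.sum_mul]; exact Finset.sum_congr rfl fun j _ => by ring]
            rw [iP_sum μ hmom]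
            exact Finset.sum_congr rfl fun j _ => iP_Cmul μ _ _
        _ = f k * iP μ (P k * P k) := by
            refine Finset.sum_eq_single k (fun j _ hne => ?_)
              (fun h => absurd (Finset.mem_range.mpr (by omega)) h)
            rw [show iP μ (P j * P k) = iP μ (P j * P k * 1) by rw [mul_one],
              hoP j k hne, mul_zero]
    have hpk : 0 < iP μ (P k * P k) := by
      have hp := hpos (P k) (hPm k).ne_zero
      have heq : iP μ (P k * P k) = ∫ x, (P k).eval x ^ 2 ∂μ := by
        unfold iP
        exact integral_congr_ae (.of_forall fun x => by simp [sq])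
      rw [heq]; exact hp
    have h0 : f k * iP μ (P k * P k) = 0 := by rw [← hDk]; exact hiPk k hk
    rcases mul_eq_zero.mp h0 with h | h
    · exact h
    · exact absurd h (ne_of_gt hpk)
  have hfsplit : D = C (f n) * P n + C (f (n + 1)) * P (n + 1) := by
    rw [hf, Finset.sum_range_succ, Finset.sum_range_succ,
      Finset.sum_eq_zero (fun k hk => by
        rw [hfk k (Finset.mem_range.mp hk), map_zero, zero_mul])]
    ring
  have hkey : (X - C c) ^ 2 * P2 n
      = P (n + 2) - C (f (n + 1)) * P (n + 1) - C (f n) * P n := by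
    have hD' : P (n + 2) - (X - C c) ^ 2 * P2 n
        = C (f n) * P n + C (f (n + 1)) * P (n + 1) := by rw [← hD, hfsplit]
    linear_combination -hD'
  have e1 : (P (n + 2)).eval c - f (n + 1) * (P (n + 1)).eval c
      - f n * (P n).eval c = 0 := by
    have hcg := congrArg (eval c) hkey
    simp only [eval_mul, eval_pow, eval_sub, eval_X, eval_C, eval_add, sub_self] at hcg
    rw [show (0 : ℝ) ^ 2 = 0 by ring, zero_mul] at hcg
    linarith [hcg]
  have e2 : (derivative (P (n + 2))).eval c - f (n + 1) * (derivative (P (n + 1))).eval c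
      - f n * (derivative (P n)).eval c = 0 := by
    have hcg := congrArg (fun p => (derivative p).eval c) hkey
    simp only [derivative_mul, derivative_pow, derivative_sub, derivative_C_mul,
      derivative_X, derivative_C, eval_add, eval_mul, eval_pow, eval_sub, eval_X,
      eval_C, sub_self, eval_natCast] at hcg
    norm_num at hcg
    linarith [hcg]
  have hdel : (P (n + 1)).eval c * (derivative (P n)).eval c
      - (derivative (P (n + 1))).eval c * (P n).eval c ≠ 0 :=
    delta_ne μ hmom hpos c hc P hPm hPd hoP n
  have hd' : dCoef P c n = f (n + 1) := by
    unfold dCoef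
    rw [div_eq_iff hdel]
    linear_combination (derivative (P n)).eval c * e1 - (P n).eval c * e2
  have he' : eCoef P c n = -(f n) := by
    unfold eCoef
    rw [div_eq_iff hdel]
    linear_combination (derivative (P (n + 1))).eval c * e1 - (P (n + 1)).eval c * e2
  rw [hkey, hd', he', map_neg]
  ring
end

section
/- For every n ≥ 0, the leading coefficients satisfy r_n^{[2]} = r_{n+1}·(K_n(c,c)/K_{n+1}(c,c))^{1/2}; equivalently, K_{n+1}(c,c)/K_n(c,c) = (r_{n+1}/r_n^{[2]})². -/
open MeasureTheory Polynomial

/-!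
Write `K_m` for the kernel polynomial `x ↦ K_m(x, c)` and put
`λ = K_n(c,c) P_{n+1}(c) / ‖P_{n+1}‖²`. The polynomial
`W = λ (x - c) P_n^{[2]} - (K_n(c,c) K_{n+1} - K_{n+1}(c,c) K_n)` has degree `≤ n` (the
coefficients of `x^{n+1}` cancel), vanishes at `c`, and is `μ`-orthogonal to every `(x - c) q`
with `deg q < n`, by `[2]`-orthogonality and the reproducing property of the kernels. Writing
`W = (x - c) q`, it is orthogonal to itself, so `W = 0`. Taking `μ`-norms then gives
`λ² ‖P_n^{[2]}‖²_{[2]} = K_n K_{n+1} (K_{n+1} - K_n)` with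
`K_{n+1} - K_n = P_{n+1}(c)² / ‖P_{n+1}‖²`, and since `P_{n+1}(c) ≠ 0` (as `c < inf E`),
`‖P_n^{[2]}‖²_{[2]} = ‖P_{n+1}‖² K_{n+1}(c,c) / K_n(c,c)`.
-/

namespace Polynomial

variable {R : Type*} [CommRing R] [Nontrivial R] {P : ℕ → R[X]}

theorem span_image_Iio_of_monic (hPm : ∀ n, (P n).Monic) (hPd : ∀ n, (P n).natDegree = n)
    (n : ℕ) : Submodule.span R (P '' Set.Iio n) = degreeLT R n :=
  Sequence.span_degreeLT ⟨P, fun i => by rw [degree_eq_natDegree (hPm i).ne_zero, hPd]⟩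
    fun i _ => by simp [(hPm i).leadingCoeff]

theorem span_image_Iic_of_monic (hPm : ∀ n, (P n).Monic) (hPd : ∀ n, (P n).natDegree = n)
    (n : ℕ) : Submodule.span R (P '' Set.Iic n) = degreeLE R n :=
  Sequence.span_degreeLE ⟨P, fun i => by rw [degree_eq_natDegree (hPm i).ne_zero, hPd]⟩
    fun i _ => by simp [(hPm i).leadingCoeff]

theorem bilinForm_apply_eq_zero_of_degree_lt (B : LinearMap.BilinForm R R[X])
    (hPm : ∀ n, (P n).Monic) (hPd : ∀ n, (P n).natDegree = n)
    (hPo : ∀ m n, m ≠ n → B (P m) (P n) = 0) {n : ℕ} {f : R[X]} (hf : f.degree < n) :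
    B (P n) f = 0 := by
  have hspan : f ∈ Submodule.span R (P '' Set.Iio n) := by
    rw [span_image_Iio_of_monic hPm hPd]; exact mem_degreeLT.2 hf
  refine LinearMap.eqOn_span (g := 0) ?_ hspan
  rintro _ ⟨m, hm, rfl⟩
  exact hPo n m (Set.mem_Iio.1 hm).ne'

end Polynomial

theorem integrable_eval_of_moments {μ : Measure ℝ}
    (hmom : ∀ n : ℕ, Integrable (fun x : ℝ => x ^ n) μ) (p : ℝ[X]) :
    Integrable (fun x => p.eval x) μ := by
  simp_rw [eval_eq_sum_range]
  exact integrable_finsetSum _ fun i _ => (hmom i).const_mul _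

noncomputable def ipForm (μ : Measure ℝ) (hmom : ∀ n : ℕ, Integrable (fun x : ℝ => x ^ n) μ) :
    LinearMap.BilinForm ℝ ℝ[X] :=
  LinearMap.mk₂ ℝ (fun f g => ∫ x, f.eval x * g.eval x ∂μ)
    (fun f₁ f₂ g => by
      simp only [eval_add, add_mul]
      exact integral_add (by simpa using integrable_eval_of_moments hmom (f₁ * g))
        (by simpa using integrable_eval_of_moments hmom (f₂ * g)))
    (fun a f g => by simp [mul_assoc, integral_const_mul])
    (fun f g₁ g₂ => by
      simp only [eval_add, mul_add]
      exact integral_add (by simpa using integrable_eval_of_moments hmom (f * g₁))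
        (by simpa using integrable_eval_of_moments hmom (f * g₂)))
    (fun a f g => by simp [mul_left_comm _ a, integral_const_mul])

section OrthogonalPolynomials

variable {μ : Measure ℝ} {hmom : ∀ n : ℕ, Integrable (fun x : ℝ => x ^ n) μ}

@[simp]
theorem ipForm_apply (f g : ℝ[X]) : ipForm μ hmom f g = ∫ x, f.eval x * g.eval x ∂μ := rfl

theorem ipForm_comm (f g : ℝ[X]) : ipForm μ hmom f g = ipForm μ hmom g f := by
  simp only [ipForm_apply, mul_comm]

theorem ipForm_self (f : ℝ[X]) : ipForm μ hmom f f = nrmSq μ f := by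
  simp [nrmSq, sq]

theorem eq_zero_of_ipForm_self_eq_zero
    (hpos : ∀ q : ℝ[X], q ≠ 0 → 0 < ∫ x, q.eval x ^ 2 ∂μ)
    {f : ℝ[X]} (hf : ipForm μ hmom f f = 0) : f = 0 := by
  by_contra hf0
  exact (hpos f hf0).ne' (by rw [← hf, ipForm_self, nrmSq])

variable {P : ℕ → ℝ[X]} {c : ℝ}

theorem Kpoly_eval_self (m : ℕ) : (Kpoly μ P c m 0).eval c = Kcc μ P c m := by
  simp only [Kpoly, Kcc, Function.iterate_zero, id_eq, eval_finsetSum, eval_mul, eval_C]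
  exact Finset.sum_congr rfl fun k _ => by ring

theorem Kpoly_natDegree_le (hPd : ∀ n, (P n).natDegree = n) (m : ℕ) :
    (Kpoly μ P c m 0).natDegree ≤ m := by
  refine natDegree_sum_le_of_forall_le _ _ fun k hk => ?_
  exact (natDegree_C_mul_le _ _).trans ((hPd k).trans_le (Finset.mem_range_succ_iff.1 hk))

theorem Kpoly_coeff_self (hPm : ∀ n, (P n).Monic) (hPd : ∀ n, (P n).natDegree = n) (m : ℕ) :
    (Kpoly μ P c m 0).coeff m = (P m).eval c / nrmSq μ (P m) := by
  rw [Kpoly, finsetSum_coeff, Finset.sum_eq_single_of_mem m (Finset.self_mem_range_succ m)]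
  · have := (hPm m).coeff_natDegree
    rw [hPd] at this
    simp [this]
  · intro k hk hkm
    rw [coeff_C_mul, coeff_eq_zero_of_natDegree_lt, mul_zero]
    exact (hPd k).trans_lt (lt_of_le_of_ne (Finset.mem_range_succ_iff.1 hk) hkm)

theorem ipForm_Kpoly_eq_eval (hpos : ∀ q : ℝ[X], q ≠ 0 → 0 < ∫ x, q.eval x ^ 2 ∂μ)
    (hPm : ∀ n, (P n).Monic) (hPd : ∀ n, (P n).natDegree = n)
    (hPo : ∀ m n, m ≠ n → ipForm μ hmom (P m) (P n) = 0) {m : ℕ} {f : ℝ[X]}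
    (hf : f.natDegree ≤ m) : ipForm μ hmom (Kpoly μ P c m 0) f = f.eval c := by
  have hspan : f ∈ Submodule.span ℝ (P '' Set.Iic m) := by
    rw [span_image_Iic_of_monic hPm hPd]
    exact mem_degreeLE.2 (degree_le_of_natDegree_le hf)
  refine LinearMap.eqOn_span (g := leval c) ?_ hspan
  rintro _ ⟨j, hj, rfl⟩
  have hNj : nrmSq μ (P j) ≠ 0 := (hpos (P j) (hPm j).ne_zero).ne'
  simp only [Kpoly, Function.iterate_zero, id_eq, ← smul_eq_C_mul, map_sum, map_smul,
    LinearMap.sum_apply, LinearMap.smul_apply, smul_eq_mul, leval_apply]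
  rw [Finset.sum_eq_single_of_mem j (Finset.mem_range_succ_iff.2 hj)
    fun k _ hkj => by rw [hPo k j hkj, mul_zero], ipForm_self]
  field_simp

theorem ipForm_Kpoly_Kpoly (hpos : ∀ q : ℝ[X], q ≠ 0 → 0 < ∫ x, q.eval x ^ 2 ∂μ)
    (hPm : ∀ n, (P n).Monic) (hPd : ∀ n, (P n).natDegree = n)
    (hPo : ∀ m n, m ≠ n → ipForm μ hmom (P m) (P n) = 0) {a b : ℕ} (hab : b ≤ a) :
    ipForm μ hmom (Kpoly μ P c a 0) (Kpoly μ P c b 0) = Kcc μ P c b :=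
  (ipForm_Kpoly_eq_eval hpos hPm hPd hPo ((Kpoly_natDegree_le hPd b).trans hab)).trans
    (Kpoly_eval_self b)

theorem Kcc_pos (hpos : ∀ q : ℝ[X], q ≠ 0 → 0 < ∫ x, q.eval x ^ 2 ∂μ)
    (hPm : ∀ n, (P n).Monic) (hPd : ∀ n, (P n).natDegree = n) (m : ℕ) : 0 < Kcc μ P c m := by
  have hP0 : P 0 = 1 := (hPm 0).natDegree_eq_zero.1 (hPd 0)
  refine Finset.sum_pos'
    (fun j _ => div_nonneg (sq_nonneg _) (integral_nonneg fun x => sq_nonneg _))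
    ⟨0, Finset.mem_range.2 m.succ_pos, ?_⟩
  simpa [hP0, nrmSq] using hpos 1 one_ne_zero

theorem eq_zero_of_isRoot_of_ipForm_X_sub_C_mul
    (hpos : ∀ q : ℝ[X], q ≠ 0 → 0 < ∫ x, q.eval x ^ 2 ∂μ) {W : ℝ[X]} {n : ℕ}
    (hWd : W.natDegree ≤ n) (hWc : W.IsRoot c)
    (hW : ∀ q : ℝ[X], q.degree < n → ipForm μ hmom W ((X - C c) * q) = 0) : W = 0 := by
  by_contra hW0
  have hfac : (X - C c) * (W /ₘ (X - C c)) = W := mul_divByMonic_eq_iff_isRoot.2 hWc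
  have hdeg : (W /ₘ (X - C c)).degree < n :=
    (degree_divByMonic_lt W (X - C c) hW0 (by simp)).trans_le (degree_le_of_natDegree_le hWd)
  have hWW := hW _ hdeg
  rw [hfac] at hWW
  exact hW0 (eq_zero_of_ipForm_self_eq_zero hpos hWW)

theorem eval_ne_zero_of_ae_lt (hpos : ∀ q : ℝ[X], q ≠ 0 → 0 < ∫ x, q.eval x ^ 2 ∂μ)
    (hPm : ∀ n, (P n).Monic) (hPd : ∀ n, (P n).natDegree = n)
    (hPo : ∀ m n, m ≠ n → ipForm μ hmom (P m) (P n) = 0) (hc : ∀ᵐ x ∂μ, c < x)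
    (k : ℕ) :
    (P k).eval c ≠ 0 := by
  intro hroot
  set g := P k /ₘ (X - C c)
  have hfac : (X - C c) * g = P k := mul_divByMonic_eq_iff_isRoot.2 hroot
  have hg : g ≠ 0 := fun h => (hPm k).ne_zero (by rw [← hfac, h, mul_zero])
  have hdeg : g.degree < k := by
    simpa [degree_eq_natDegree (hPm k).ne_zero, hPd] using
      degree_divByMonic_lt (P k) (X - C c) (hPm k).ne_zero (by simp)
  -- `P k = (X - c) g` is orthogonal to `g`, so `(x - c) g(x)²` integrates to zero.
  have horth : ∫ x, (x - c) * g.eval x ^ 2 ∂μ = 0 := by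
    rw [← bilinForm_apply_eq_zero_of_degree_lt (ipForm μ hmom) hPm hPd hPo hdeg, ← hfac,
      ipForm_apply]
    simp only [eval_mul, eval_sub, eval_X, eval_C, sq, mul_assoc]
  have hint : Integrable (fun x => (x - c) * g.eval x ^ 2) μ := by
    convert integrable_eval_of_moments hmom ((X - C c) * g * g) using 2
    simp only [eval_mul, eval_sub, eval_X, eval_C]
    ring
  have hzero : (fun x => (x - c) * g.eval x ^ 2) =ᵐ[μ] 0 :=
    (integral_eq_zero_iff_of_nonneg_ae
      (hc.mono fun x hx => mul_nonneg (sub_pos.2 hx).le (sq_nonneg _)) hint).1 horth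
  have hgsq : (fun x => g.eval x ^ 2) =ᵐ[μ] 0 := by
    filter_upwards [hzero, hc] with x hx hcx
    simpa [(sub_pos.2 hcx).ne'] using hx
  exact (hpos g hg).ne' (by simp [integral_congr_ae hgsq])

theorem natDegree_X_sub_C_mul_le {q : ℝ[X]} {n : ℕ} (hq : q.degree < n) :
    ((X - C c) * q).natDegree ≤ n := by
  rw [natDegree_le_iff_degree_le, degree_mul, degree_X_sub_C, add_comm]
  exact Nat.WithBot.add_one_le_of_lt hq

variable {P2 : ℕ → ℝ[X]}

theorem smul_X_sub_C_mul_eq_Kpoly_sub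
    (hpos : ∀ q : ℝ[X], q ≠ 0 → 0 < ∫ x, q.eval x ^ 2 ∂μ)
    (hPm : ∀ n, (P n).Monic) (hPd : ∀ n, (P n).natDegree = n)
    (hPo : ∀ m n, m ≠ n → ipForm μ hmom (P m) (P n) = 0)
    (hP2m : ∀ n, (P2 n).Monic) (hP2d : ∀ n, (P2 n).natDegree = n)
    (hP2o : ∀ m n, m ≠ n → ipForm μ hmom ((X - C c) * P2 m) ((X - C c) * P2 n) = 0)
    (n : ℕ) :
    (Kcc μ P c n * (P (n + 1)).eval c / nrmSq μ (P (n + 1))) • ((X - C c) * P2 n)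
      = Kcc μ P c n • Kpoly μ P c (n + 1) 0 - Kcc μ P c (n + 1) • Kpoly μ P c n 0 := by
  have hVm : ((X - C c) * P2 n).Monic := (monic_X_sub_C c).mul (hP2m n)
  have hVd : ((X - C c) * P2 n).natDegree = n + 1 := by
    rw [(monic_X_sub_C c).natDegree_mul (hP2m n), natDegree_X_sub_C, hP2d, add_comm]
  have hNp : nrmSq μ (P (n + 1)) ≠ 0 := (hpos _ (hPm (n + 1)).ne_zero).ne'
  rw [← sub_eq_zero]
  refine eq_zero_of_isRoot_of_ipForm_X_sub_C_mul (hmom := hmom) (c := c) (n := n) hpos ?_ ?_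
    fun q hq => ?_
  · refine natDegree_le_pred (n := n + 1) ?_ ?_
    · refine (natDegree_sub_le _ _).trans
        (max_le ?_ ((natDegree_sub_le _ _).trans (max_le ?_ ?_)))
      · exact (natDegree_smul_le _ _).trans hVd.le
      · exact (natDegree_smul_le _ _).trans (Kpoly_natDegree_le hPd _)
      · exact (natDegree_smul_le _ _).trans ((Kpoly_natDegree_le hPd _).trans n.le_succ)
    · have hV1 : ((X - C c) * P2 n).coeff (n + 1) = 1 := hVd ▸ hVm.coeff_natDegree
      have hK0 : (Kpoly μ P c n 0).coeff (n + 1) = 0 :=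
        coeff_eq_zero_of_natDegree_lt ((Kpoly_natDegree_le hPd n).trans_lt n.lt_succ_self)
      simp only [coeff_sub, coeff_smul, smul_eq_mul, hV1, hK0, Kpoly_coeff_self hPm hPd]
      field_simp
      ring
  · simp [Kpoly_eval_self]
    ring
  · have hV : ipForm μ hmom ((X - C c) * P2 n) ((X - C c) * q) = 0 :=
      bilinForm_apply_eq_zero_of_degree_lt
        ((ipForm μ hmom).compl₁₂ (LinearMap.mulLeft ℝ (X - C c))
          (LinearMap.mulLeft ℝ (X - C c)))
        hP2m hP2d hP2o hq
    have hqn := natDegree_X_sub_C_mul_le (c := c) hq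
    simp only [map_sub, map_smul, LinearMap.sub_apply, LinearMap.smul_apply, smul_eq_mul, hV,
      ipForm_Kpoly_eq_eval hpos hPm hPd hPo hqn,
      ipForm_Kpoly_eq_eval hpos hPm hPd hPo (hqn.trans n.le_succ)]
    simp

theorem nrmSq2_eq_nrmSq_mul_Kcc_div
    (hpos : ∀ q : ℝ[X], q ≠ 0 → 0 < ∫ x, q.eval x ^ 2 ∂μ)
    (hc : ∀ᵐ x ∂μ, c < x) (hPm : ∀ n, (P n).Monic) (hPd : ∀ n, (P n).natDegree = n)
    (hPo : ∀ m n, m ≠ n → ipForm μ hmom (P m) (P n) = 0)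
    (hP2m : ∀ n, (P2 n).Monic) (hP2d : ∀ n, (P2 n).natDegree = n)
    (hP2o : ∀ m n, m ≠ n → ipForm μ hmom ((X - C c) * P2 m) ((X - C c) * P2 n) = 0)
    (n : ℕ) :
    nrmSq2 μ c (P2 n) = nrmSq μ (P (n + 1)) * Kcc μ P c (n + 1) / Kcc μ P c n := by
  have key := congrArg (fun p => ipForm μ hmom p p)
    (smul_X_sub_C_mul_eq_Kpoly_sub hpos hPm hPd hPo hP2m hP2d hP2o n)
  have hVV : ipForm μ hmom ((X - C c) * P2 n) ((X - C c) * P2 n) = nrmSq2 μ c (P2 n) := by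
    simp only [ipForm_apply, nrmSq2, eval_mul, eval_sub, eval_X, eval_C]
    exact integral_congr_ae (.of_forall fun x => by ring)
  simp only [map_sub, map_smul, LinearMap.sub_apply, LinearMap.smul_apply, smul_eq_mul, hVV,
    ipForm_comm _ (Kpoly μ P c (n + 1) 0), ipForm_Kpoly_Kpoly hpos hPm hPd hPo le_rfl,
    ipForm_Kpoly_Kpoly hpos hPm hPd hPo n.le_succ] at key
  have hdiff :
      Kcc μ P c (n + 1) - Kcc μ P c n = (P (n + 1)).eval c ^ 2 / nrmSq μ (P (n + 1)) := by
    rw [Kcc, Kcc, Finset.sum_range_succ, add_sub_cancel_left]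
  have hKn := (Kcc_pos (c := c) hpos hPm hPd n).ne'
  have hNp : nrmSq μ (P (n + 1)) ≠ 0 := (hpos _ (hPm (n + 1)).ne_zero).ne'
  have hpc := eval_ne_zero_of_ae_lt hpos hPm hPd hPo hc (n + 1)
  have h : (Kcc μ P c n * (P (n + 1)).eval c / nrmSq μ (P (n + 1))) ^ 2 * nrmSq2 μ c (P2 n)
      = Kcc μ P c n * Kcc μ P c (n + 1) * ((P (n + 1)).eval c ^ 2 / nrmSq μ (P (n + 1))) := by
    rw [← hdiff]
    linear_combination key
  field_simp at h
  rw [eq_div_iff hKn, mul_comm, h]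

end OrthogonalPolynomials

theorem stmt2_general
    (μ : Measure ℝ)
    (hmom : ∀ n : ℕ, Integrable (fun x : ℝ => x ^ n) μ)
    (hpos : ∀ q : Polynomial ℝ, q ≠ 0 → 0 < ∫ x, q.eval x ^ 2 ∂μ)
    (c : ℝ) (hc : ∀ᵐ x ∂μ, c < x)
    (P : ℕ → Polynomial ℝ) (hPm : ∀ n, (P n).Monic) (hPd : ∀ n, (P n).natDegree = n)
    (hPo : ∀ m n, m ≠ n → ∫ x, (P m).eval x * (P n).eval x ∂μ = 0)
    (P2 : ℕ → Polynomial ℝ) (hP2m : ∀ n, (P2 n).Monic) (hP2d : ∀ n, (P2 n).natDegree = n)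
    (hP2o : ∀ m n, m ≠ n → ∫ x, (P2 m).eval x * (P2 n).eval x * (x - c) ^ 2 ∂μ = 0) :
    ∀ n : ℕ,
      r2C μ c P2 n = rC μ P (n + 1) * Real.sqrt (Kcc μ P c n / Kcc μ P c (n + 1))
      ∧ Kcc μ P c (n + 1) / Kcc μ P c n = (rC μ P (n + 1) / r2C μ c P2 n) ^ 2 := by
  intro n
  have hN2 : nrmSq2 μ c (P2 n) = nrmSq μ (P (n + 1)) * Kcc μ P c (n + 1) / Kcc μ P c n := by
    refine nrmSq2_eq_nrmSq_mul_Kcc_div (hmom := hmom) hpos hc hPm hPd hPo hP2m hP2d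
      (fun m k hmk => ?_) n
    rw [ipForm_apply, ← hP2o m k hmk]
    simp only [eval_mul, eval_sub, eval_X, eval_C]
    exact integral_congr_ae (.of_forall fun x => by ring)
  have hNp : 0 < nrmSq μ (P (n + 1)) := hpos _ (hPm _).ne_zero
  have hKn := Kcc_pos (c := c) hpos hPm hPd n
  have hKn1 := Kcc_pos (c := c) hpos hPm hPd (n + 1)
  constructor
  · rw [r2C, rC, hN2, Real.sqrt_div (by positivity), Real.sqrt_div hKn.le, Real.sqrt_mul hNp.le]
    field_simp
  · rw [rC, r2C, div_div_div_cancel_left' _ _ one_ne_zero, div_pow, Real.sq_sqrt hNp.le,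
      Real.sq_sqrt (hN2 ▸ by positivity), hN2]
    field_simp

/-- for every `n ≥ 0`,
`r_n^{[2]} = r_{n+1}·(K_n(c,c)/K_{n+1}(c,c))^{1/2}`, equivalently
`K_{n+1}(c,c)/K_n(c,c) = (r_{n+1}/r_n^{[2]})²`. -/
theorem stmt2
    (μ : Measure ℝ) [IsFiniteMeasure μ]
    (hmom : ∀ n : ℕ, Integrable (fun x : ℝ => x ^ n) μ)
    (hpos : ∀ q : Polynomial ℝ, q ≠ 0 → 0 < ∫ x, q.eval x ^ 2 ∂μ)
    (c : ℝ) (hc : ∀ᵐ x ∂μ, c < x)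
    (P : ℕ → Polynomial ℝ) (hPm : ∀ n, (P n).Monic) (hPd : ∀ n, (P n).natDegree = n)
    (hPo : ∀ m n, m ≠ n → ∫ x, (P m).eval x * (P n).eval x ∂μ = 0)
    (P2 : ℕ → Polynomial ℝ) (hP2m : ∀ n, (P2 n).Monic) (hP2d : ∀ n, (P2 n).natDegree = n)
    (hP2o : ∀ m n, m ≠ n → ∫ x, (P2 m).eval x * (P2 n).eval x * (x - c) ^ 2 ∂μ = 0) :
    ∀ n : ℕ,
      r2C μ c P2 n = rC μ P (n + 1) * Real.sqrt (Kcc μ P c n / Kcc μ P c (n + 1))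
      ∧ Kcc μ P c (n + 1) / Kcc μ P c n = (rC μ P (n + 1) / r2C μ c P2 n) ^ 2 :=
  stmt2_general μ hmom hpos c hc P hPm hPd hPo P2 hP2m hP2d hP2o
end

section
/- For every n ≥ 1: S_n^{M,N}(x) = P_n(x) − M·S_n^{M,N}(c)·K_{n−1}(x,c) − N·(S_n^{M,N})′(c)·K_{n−1}^{(0,1)}(x,c), where moreover, with D = (1 + M K_{n−1}(c,c))(1 + N K_{n−1}^{(1,1)}(c,c)) − M N K_{n−1}^{(0,1)}(c,c) K_{n−1}^{(1,0)}(c,c), one has S_n^{M,N}(c) = [P_n(c)(1 + N K_{n−1}^{(1,1)}(c,c)) − N K_{n−1}^{(0,1)}(c,c) P_n′(c)]/D and (S_n^{M,N})′(c) = [(1 + M K_{n−1}(c,c)) P_n′(c) − M K_{n−1}^{(1,0)}(c,c) P_n(c)]/D. -/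
open MeasureTheory Polynomial

/-- Determinant `D` of the linear system for `S_n^{M,N}(c)` and `(S_n^{M,N})'(c)`. -/
noncomputable def Dden (μ : Measure ℝ) (P : ℕ → Polynomial ℝ) (c M N : ℝ) (n : ℕ) : ℝ :=
  (1 + M * Kder μ P c n 0 0) * (1 + N * Kder μ P c n 1 1)
    - M * N * Kder μ P c n 0 1 * Kder μ P c n 1 0

private lemma integrable_evalP (μ : Measure ℝ)
    (hmom : ∀ n : ℕ, Integrable (fun x : ℝ => x ^ n) μ)
    (p : Polynomial ℝ) : Integrable (fun x => p.eval x) μ := by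
  have h : (fun x : ℝ => p.eval x)
      = fun x => ∑ i ∈ Finset.range (p.natDegree + 1), p.coeff i * x ^ i := by
    funext x; exact p.eval_eq_sum_range x
  rw [h]
  exact integrable_finset_sum _ fun i _ => (hmom i).const_mul _

private lemma ipS_zero (μ : Measure ℝ) (c : ℝ) (f g : Polynomial ℝ) :
    ipS μ c 0 0 f g = ∫ x, f.eval x * g.eval x ∂μ := by simp [ipS]

private lemma ipS_sum (μ : Measure ℝ)
    (hmom : ∀ n : ℕ, Integrable (fun x : ℝ => x ^ n) μ)
    (c M N : ℝ) (f : Polynomial ℝ) (s : Finset ℕ) (b : ℕ → ℝ) (g : ℕ → Polynomial ℝ) :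
    ipS μ c M N f (∑ i ∈ s, C (b i) * g i) = ∑ i ∈ s, b i * ipS μ c M N f (g i) := by
  have hev : ∀ x : ℝ, f.eval x * (∑ i ∈ s, C (b i) * g i).eval x
      = ∑ i ∈ s, b i * (f.eval x * (g i).eval x) := by
    intro x
    rw [eval_finset_sum, Finset.mul_sum]
    refine Finset.sum_congr rfl fun i _ => ?_
    simp only [eval_mul, eval_C]; ring
  have hint : ∀ i ∈ s, Integrable (fun x => b i * (f.eval x * (g i).eval x)) μ := fun i _ => by
    simpa [eval_mul] using (integrable_evalP μ hmom (f * g i)).const_mul (b i)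
  have hder : derivative (∑ i ∈ s, C (b i) * g i) = ∑ i ∈ s, C (b i) * derivative (g i) := by
    rw [derivative_sum]; exact Finset.sum_congr rfl fun i _ => derivative_C_mul _ _
  unfold ipS
  rw [show (∫ x, f.eval x * (∑ i ∈ s, C (b i) * g i).eval x ∂μ)
      = ∑ i ∈ s, b i * ∫ x, f.eval x * (g i).eval x ∂μ by
    simp_rw [hev]
    rw [integral_finset_sum _ hint]
    exact Finset.sum_congr rfl fun i _ => integral_const_mul _ _]
  rw [hder, eval_finset_sum, eval_finset_sum]
  simp only [eval_mul, eval_C]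
  simp only [Finset.mul_sum]
  rw [← Finset.sum_add_distrib, ← Finset.sum_add_distrib]
  exact Finset.sum_congr rfl fun i _ => by ring

private lemma expand_monic (T : ℕ → Polynomial ℝ) (hTm : ∀ n, (T n).Monic)
    (hTd : ∀ n, (T n).natDegree = n) :
    ∀ m : ℕ, ∀ q : Polynomial ℝ, q.natDegree ≤ m →
      ∃ b : ℕ → ℝ, q = ∑ i ∈ Finset.range (m + 1), C (b i) * T i := by
  intro m
  induction m with
  | zero =>
    intro q hq
    have hT0 : T 0 = 1 := (hTm 0).natDegree_eq_zero.mp (hTd 0)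
    refine ⟨fun _ => q.coeff 0, ?_⟩
    rw [Finset.sum_range_one, hT0, mul_one]
    exact Polynomial.eq_C_of_natDegree_le_zero hq
  | succ m ih =>
    intro q hq
    have hcoef : (T (m + 1)).coeff (m + 1) = 1 := by
      have h := (hTm (m + 1)).coeff_natDegree
      rwa [hTd] at h
    have hdq : (q - C (q.coeff (m + 1)) * T (m + 1)).natDegree ≤ m := by
      rw [natDegree_le_iff_coeff_eq_zero]
      intro k hk
      rw [coeff_sub, coeff_C_mul]
      rcases eq_or_lt_of_le (Nat.succ_le_of_lt hk) with h | h
      · rw [← h, hcoef, mul_one, sub_self]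
      · have h1 : q.coeff k = 0 := coeff_eq_zero_of_natDegree_lt (lt_of_le_of_lt hq h)
        have h2 : (T (m + 1)).coeff k = 0 :=
          coeff_eq_zero_of_natDegree_lt (by rw [hTd]; exact h)
        rw [h1, h2, mul_zero, sub_zero]
    obtain ⟨b, hb⟩ := ih _ hdq
    refine ⟨Function.update b (m + 1) (q.coeff (m + 1)), ?_⟩
    rw [Finset.sum_range_succ, Function.update_self]
    rw [show ∑ i ∈ Finset.range (m + 1),
          C (Function.update b (m + 1) (q.coeff (m + 1)) i) * T i
        = ∑ i ∈ Finset.range (m + 1), C (b i) * T i from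
      Finset.sum_congr rfl fun i hi => by
        rw [Function.update_of_ne (Nat.ne_of_lt (Finset.mem_range.mp hi))], ← hb]
    ring

/-- for every `n ≥ 1`,
`S_n^{M,N}(x) = P_n(x) - M S_n^{M,N}(c) K_{n-1}(x,c) - N (S_n^{M,N})'(c) K_{n-1}^{(0,1)}(x,c)`,
together with the determinantal expressions for `S_n^{M,N}(c)` and `(S_n^{M,N})'(c)`. -/
theorem stmt4
    (μ : Measure ℝ) [IsFiniteMeasure μ]
    (hmom : ∀ n : ℕ, Integrable (fun x : ℝ => x ^ n) μ)
    (hpos : ∀ q : Polynomial ℝ, q ≠ 0 → 0 < ∫ x, q.eval x ^ 2 ∂μ)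
    (c : ℝ) (hc : ∀ᵐ x ∂μ, c < x)
    (P : ℕ → Polynomial ℝ) (hPm : ∀ n, (P n).Monic) (hPd : ∀ n, (P n).natDegree = n)
    (hPo : ∀ m n, m ≠ n → ∫ x, (P m).eval x * (P n).eval x ∂μ = 0)
    (M N : ℝ) (hM : 0 ≤ M) (hN : 0 ≤ N)
    (S : ℕ → Polynomial ℝ) (hSm : ∀ n, (S n).Monic) (hSd : ∀ n, (S n).natDegree = n)
    (hSo : ∀ m n, m ≠ n → ipS μ c M N (S m) (S n) = 0) :
    ∀ n : ℕ, 1 ≤ n →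
      S n = P n - C (M * (S n).eval c) * Kpoly μ P c (n - 1) 0
              - C (N * (derivative (S n)).eval c) * Kpoly μ P c (n - 1) 1
      ∧ (S n).eval c
          = ((P n).eval c * (1 + N * Kder μ P c (n - 1) 1 1)
              - N * Kder μ P c (n - 1) 0 1 * (derivative (P n)).eval c)
            / Dden μ P c M N (n - 1)
      ∧ (derivative (S n)).eval c
          = ((1 + M * Kder μ P c (n - 1) 0 0) * (derivative (P n)).eval c
              - M * Kder μ P c (n - 1) 1 0 * (P n).eval c)
            / Dden μ P c M N (n - 1) := by
  
  intro n hn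
  obtain ⟨m, rfl⟩ : ∃ m, n = m + 1 := ⟨n - 1, (Nat.succ_pred_eq_of_pos hn).symm⟩
  simp only [Nat.add_sub_cancel]
  -- basic facts
  have hnrm : ∀ j, 0 < nrmSq μ (P j) := fun j => hpos _ (hPm j).ne_zero
  have hintPP : ∀ p q : Polynomial ℝ, Integrable (fun x => p.eval x * q.eval x) μ :=
    fun p q => by simpa [eval_mul] using integrable_evalP μ hmom (p * q)
  -- Sobolev orthogonality to all lower-degree polynomials
  have hSorthP : ∀ q : Polynomial ℝ, q.natDegree ≤ m → ipS μ c M N (S (m + 1)) q = 0 := by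
    intro q hq
    obtain ⟨b, hb⟩ := expand_monic S hSm hSd m q hq
    rw [hb, ipS_sum μ hmom]
    refine Finset.sum_eq_zero fun i hi => ?_
    rw [hSo (m + 1) i (by have := Finset.mem_range.mp hi; omega), mul_zero]
  -- difference R has degree ≤ m
  have hR : (S (m + 1) - P (m + 1)).natDegree ≤ m := by
    by_cases hR0 : S (m + 1) - P (m + 1) = 0
    · rw [hR0]; simp
    · have hdeg : (S (m + 1) - P (m + 1)).degree < (S (m + 1)).degree := by
        refine degree_sub_lt ?_ (hSm (m + 1)).ne_zero ?_
        · rw [degree_eq_natDegree (hSm (m + 1)).ne_zero,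
            degree_eq_natDegree (hPm (m + 1)).ne_zero, hSd, hPd]
        · rw [(hSm (m + 1)).leadingCoeff, (hPm (m + 1)).leadingCoeff]
      have := natDegree_lt_natDegree hR0 hdeg
      rw [hSd] at this; omega
  obtain ⟨b, hb⟩ := expand_monic P hPm hPd m _ hR
  -- compute the coefficients b j
  have hbj : ∀ j ∈ Finset.range (m + 1),
      b j = (-(M * (S (m + 1)).eval c * (P j).eval c)
        - N * (derivative (S (m + 1))).eval c * (derivative (P j)).eval c) / nrmSq μ (P j) := by
    intro j hj
    have hjm : j < m + 1 := Finset.mem_range.mp hj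
    have h1 : ipS μ c 0 0 (P j) (S (m + 1) - P (m + 1)) = b j * nrmSq μ (P j) := by
      rw [hb, ipS_sum μ hmom]
      rw [Finset.sum_eq_single j ?_ ?_]
      · rw [ipS_zero]
        congr 1
        unfold nrmSq
        refine integral_congr_ae (Filter.Eventually.of_forall fun x => ?_)
        ring
      · intro i _ hne
        rw [ipS_zero, hPo j i (Ne.symm hne), mul_zero]
      · intro h; exact absurd hj h
    have h2 : ipS μ c 0 0 (P j) (S (m + 1) - P (m + 1))
        = -(M * (S (m + 1)).eval c * (P j).eval c)
          - N * (derivative (S (m + 1))).eval c * (derivative (P j)).eval c := by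
      have hq : ipS μ c M N (S (m + 1)) (P j) = 0 := hSorthP _ (by rw [hPd]; omega)
      have e1 : (∫ x, (P j).eval x * (S (m + 1) - P (m + 1)).eval x ∂μ)
          = (∫ x, (S (m + 1)).eval x * (P j).eval x ∂μ)
            - ∫ x, (P j).eval x * (P (m + 1)).eval x ∂μ := by
        rw [← integral_sub (hintPP _ _) (hintPP _ _)]
        refine integral_congr_ae (Filter.Eventually.of_forall fun x => ?_)
        simp only [eval_sub]; ring
      rw [ipS_zero, e1, hPo j (m + 1) (by omega)]
      simp only [ipS] at hq
      linarith
    have := h1.symm.trans h2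
    field_simp [(hnrm j).ne']
    linarith [this]
  -- the representation formula
  have key : S (m + 1) - P (m + 1) = ∑ k ∈ Finset.range (m + 1),
      (-(C (M * (S (m + 1)).eval c)
          * (C ((derivative^[0] (P k)).eval c / nrmSq μ (P k)) * P k))
        - C (N * (derivative (S (m + 1))).eval c)
          * (C ((derivative^[1] (P k)).eval c / nrmSq μ (P k)) * P k)) := by
    rw [hb]
    refine Finset.sum_congr rfl fun k hk => ?_
    rw [hbj k hk]
    simp only [Function.iterate_zero, id_eq, Function.iterate_one]
    rw [show (-(M * (S (m + 1)).eval c * (P k).eval c)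
          - N * (derivative (S (m + 1))).eval c * (derivative (P k)).eval c) / nrmSq μ (P k)
        = -(M * (S (m + 1)).eval c * ((P k).eval c / nrmSq μ (P k)))
          - N * (derivative (S (m + 1))).eval c
            * ((derivative (P k)).eval c / nrmSq μ (P k)) from by ring]
    simp only [C_sub, C_neg, C_mul]
    ring
  have hrep : S (m + 1) = P (m + 1)
      - C (M * (S (m + 1)).eval c) * Kpoly μ P c m 0
      - C (N * (derivative (S (m + 1))).eval c) * Kpoly μ P c m 1 := by
    have key2 : S (m + 1) - P (m + 1)
        = -(C (M * (S (m + 1)).eval c) * Kpoly μ P c m 0)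
          - C (N * (derivative (S (m + 1))).eval c) * Kpoly μ P c m 1 := by
      rw [key, Finset.sum_sub_distrib, Finset.sum_neg_distrib,
        ← Finset.mul_sum, ← Finset.mul_sum]
      unfold Kpoly
      rfl
    linear_combination key2
  refine ⟨hrep, ?_, ?_⟩
  -- kernel evaluations
  all_goals {
    have hK0e : (Kpoly μ P c m 0).eval c = Kder μ P c m 0 0 := by
      unfold Kpoly Kder
      rw [eval_finset_sum]
      refine Finset.sum_congr rfl fun k _ => ?_
      simp only [eval_mul, eval_C, Function.iterate_zero, id_eq]
      ring
    have hK1e : (Kpoly μ P c m 1).eval c = Kder μ P c m 0 1 := by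
      unfold Kpoly Kder
      rw [eval_finset_sum]
      refine Finset.sum_congr rfl fun k _ => ?_
      simp only [eval_mul, eval_C, Function.iterate_zero, id_eq, Function.iterate_one]
      ring
    have hK0d : (derivative (Kpoly μ P c m 0)).eval c = Kder μ P c m 1 0 := by
      unfold Kpoly Kder
      rw [derivative_sum, eval_finset_sum]
      refine Finset.sum_congr rfl fun k _ => ?_
      rw [derivative_C_mul]
      simp only [eval_mul, eval_C, Function.iterate_zero, id_eq, Function.iterate_one]
      ring
    have hK1d : (derivative (Kpoly μ P c m 1)).eval c = Kder μ P c m 1 1 := by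
      unfold Kpoly Kder
      rw [derivative_sum, eval_finset_sum]
      refine Finset.sum_congr rfl fun k _ => ?_
      rw [derivative_C_mul]
      simp only [eval_mul, eval_C, Function.iterate_zero, id_eq, Function.iterate_one]
      ring
    -- the two linear equations
    have e1 : (S (m + 1)).eval c = (P (m + 1)).eval c
        - M * (S (m + 1)).eval c * Kder μ P c m 0 0
        - N * (derivative (S (m + 1))).eval c * Kder μ P c m 0 1 := by
      conv_lhs => rw [hrep]
      rw [eval_sub, eval_sub, eval_mul, eval_mul, eval_C, eval_C, hK0e, hK1e]
    have e2 : (derivative (S (m + 1))).eval c = (derivative (P (m + 1))).eval c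
        - M * (S (m + 1)).eval c * Kder μ P c m 1 0
        - N * (derivative (S (m + 1))).eval c * Kder μ P c m 1 1 := by
      conv_lhs => rw [hrep]
      rw [derivative_sub, derivative_sub, derivative_C_mul, derivative_C_mul,
        eval_sub, eval_sub, eval_mul, eval_mul, eval_C, eval_C, hK0d, hK1d]
    -- symmetry and Cauchy-Schwarz
    have hsym : Kder μ P c m 0 1 = Kder μ P c m 1 0 := by
      unfold Kder
      refine Finset.sum_congr rfl fun k _ => ?_
      simp only [Function.iterate_zero, id_eq, Function.iterate_one]
      ring
    have hK00 : 0 ≤ Kder μ P c m 0 0 := by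
      refine Finset.sum_nonneg fun k _ => ?_
      simp only [Function.iterate_zero, id_eq]
      exact div_nonneg (mul_self_nonneg _) (hnrm k).le
    have hK11 : 0 ≤ Kder μ P c m 1 1 := by
      refine Finset.sum_nonneg fun k _ => ?_
      simp only [Function.iterate_one]
      exact div_nonneg (mul_self_nonneg _) (hnrm k).le
    have hCS : Kder μ P c m 0 1 ^ 2 ≤ Kder μ P c m 0 0 * Kder μ P c m 1 1 := by
      have h := Finset.sum_mul_sq_le_sq_mul_sq (Finset.range (m + 1))
        (fun k => (P k).eval c / Real.sqrt (nrmSq μ (P k)))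
        (fun k => (derivative (P k)).eval c / Real.sqrt (nrmSq μ (P k)))
      have e00 : Kder μ P c m 0 0 = ∑ k ∈ Finset.range (m + 1),
          ((P k).eval c / Real.sqrt (nrmSq μ (P k))) ^ 2 := by
        refine Finset.sum_congr rfl fun k _ => ?_
        simp only [Function.iterate_zero, id_eq]
        rw [div_pow, Real.sq_sqrt (hnrm k).le]
        ring
      have e11 : Kder μ P c m 1 1 = ∑ k ∈ Finset.range (m + 1),
          ((derivative (P k)).eval c / Real.sqrt (nrmSq μ (P k))) ^ 2 := by
        refine Finset.sum_congr rfl fun k _ => ?_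
        simp only [Function.iterate_one]
        rw [div_pow, Real.sq_sqrt (hnrm k).le]
        ring
      have e01 : Kder μ P c m 0 1 = ∑ k ∈ Finset.range (m + 1),
          ((P k).eval c / Real.sqrt (nrmSq μ (P k)))
            * ((derivative (P k)).eval c / Real.sqrt (nrmSq μ (P k))) := by
        refine Finset.sum_congr rfl fun k _ => ?_
        simp only [Function.iterate_zero, id_eq, Function.iterate_one]
        rw [div_mul_div_comm, Real.mul_self_sqrt (hnrm k).le]
      rw [e00, e11, e01]
      exact h
    have hD : 0 < Dden μ P c M N m := by
      unfold Dden
      rw [← hsym]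
      nlinarith [mul_nonneg hM hK00, mul_nonneg hN hK11,
        mul_le_mul_of_nonneg_left hCS (mul_nonneg hM hN),
        mul_nonneg (mul_nonneg hM hN) (mul_nonneg hK00 hK11)]
    rw [eq_div_iff hD.ne']
    unfold Dden
    first
    | linear_combination (1 + N * Kder μ P c m 1 1) * e1 - N * Kder μ P c m 0 1 * e2
    | linear_combination (1 + M * Kder μ P c m 0 0) * e2 - M * Kder μ P c m 1 0 * e1 }
end

section
/- For every n ≥ 1: s_n^{M,N}(x) = α_{n+1,n} p_{n+1}(x) + α_{n,n} p_n(x) − M·s_n^{M,N}(c)·K_{n+1}(x,c) − N·(s_n^{M,N})′(c)·K_{n+1}^{(0,1)}(x,c), where α_{n+1,n} = M·s_n^{M,N}(c)·p_{n+1}(c) + N·(s_n^{M,N})′(c)·p_{n+1}′(c) and α_{n,n} = t_n/r_n + M·s_n^{M,N}(c)·p_n(c) + N·(s_n^{M,N})′(c)·p_n′(c). -/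
open MeasureTheory Polynomial

section Aux
variable {μ : Measure ℝ} [IsFiniteMeasure μ]

lemma integrable_eval (hmom : ∀ n : ℕ, Integrable (fun x : ℝ => x ^ n) μ)
    (q : Polynomial ℝ) : Integrable (fun x => q.eval x) μ := by
  have h : (fun x => q.eval x)
      = fun x => ∑ i ∈ Finset.range (q.natDegree + 1), q.coeff i * x ^ i := by
    funext x
    rw [Polynomial.eval_eq_sum_range]
  rw [h]
  exact integrable_finset_sum _ fun i _ => (hmom i).const_mul _

lemma integrable_eval_mul (hmom : ∀ n : ℕ, Integrable (fun x : ℝ => x ^ n) μ)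
    (f g : Polynomial ℝ) : Integrable (fun x => f.eval x * g.eval x) μ := by
  simpa [Polynomial.eval_mul] using integrable_eval hmom (f * g)

lemma integral_sum_mul (hmom : ∀ n : ℕ, Integrable (fun x : ℝ => x ^ n) μ)
    (s : Finset ℕ) (f : ℕ → Polynomial ℝ) (g : Polynomial ℝ) :
    ∫ x, (∑ k ∈ s, f k).eval x * g.eval x ∂μ
      = ∑ k ∈ s, ∫ x, (f k).eval x * g.eval x ∂μ := by
  have h : ∀ x : ℝ, (∑ k ∈ s, f k).eval x * g.eval x
      = ∑ k ∈ s, (f k).eval x * g.eval x := by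
    intro x
    rw [Polynomial.eval_finset_sum, Finset.sum_mul]
  simp_rw [h]
  exact integral_finset_sum _ fun k _ => integrable_eval_mul hmom _ _

lemma integral_C_mul_mul (a : ℝ) (f g : Polynomial ℝ) :
    ∫ x, (C a * f).eval x * g.eval x ∂μ = a * ∫ x, f.eval x * g.eval x ∂μ := by
  simp only [Polynomial.eval_mul, Polynomial.eval_C, mul_assoc]
  exact integral_const_mul a _

lemma span_mono (P : ℕ → Polynomial ℝ) (hPm : ∀ n, (P n).Monic)
    (hPd : ∀ n, (P n).natDegree = n) :
    ∀ n (q : Polynomial ℝ), q.natDegree ≤ n →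
      ∃ b : ℕ → ℝ, q = ∑ k ∈ Finset.range (n + 1), C (b k) * P k := by
  intro n
  induction n with
  | zero =>
    intro q hq
    refine ⟨fun _ => q.coeff 0, ?_⟩
    have h0 : P 0 = 1 := by
      have := Polynomial.eq_C_of_natDegree_eq_zero (hPd 0)
      have h1 : (P 0).coeff 0 = 1 := by
        have := (hPm 0).leadingCoeff
        rwa [Polynomial.leadingCoeff, hPd 0] at this
      rw [this, h1, map_one]
    have hq0 : q = C (q.coeff 0) := Polynomial.eq_C_of_natDegree_le_zero hq
    simp [h0, ← hq0]
  | succ n ih =>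
    intro q hq
    set a := q.coeff (n + 1) with ha
    have hcoeff : (P (n + 1)).coeff (n + 1) = 1 := by
      have := (hPm (n + 1)).leadingCoeff
      rwa [Polynomial.leadingCoeff, hPd (n + 1)] at this
    have hq' : (q - C a * P (n + 1)).natDegree ≤ n := by
      apply Polynomial.natDegree_le_iff_coeff_eq_zero.2
      intro m hm
      rcases eq_or_lt_of_le (Nat.succ_le_of_lt hm) with h | h
      · simp [Polynomial.coeff_sub, Polynomial.coeff_C_mul, ← h, hcoeff, ha]
      · have h1 : q.coeff m = 0 :=
          Polynomial.coeff_eq_zero_of_natDegree_lt (lt_of_le_of_lt hq h)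
        have h2 : (P (n + 1)).coeff m = 0 :=
          Polynomial.coeff_eq_zero_of_natDegree_lt (by rw [hPd]; exact h)
        simp [Polynomial.coeff_sub, Polynomial.coeff_C_mul, h1, h2]
    obtain ⟨b, hb⟩ := ih _ hq'
    have hsum : (∑ k ∈ Finset.range (n + 2), C (if k = n + 1 then a else b k) * P k)
        = (∑ k ∈ Finset.range (n + 1), C (b k) * P k) + C a * P (n + 1) := by
      rw [Finset.sum_range_succ, if_pos rfl]
      congr 1
      refine Finset.sum_congr rfl fun k hk => ?_
      rw [if_neg (by simp only [Finset.mem_range] at hk; omega)]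
    refine ⟨fun k => if k = n + 1 then a else b k, ?_⟩
    show q = ∑ k ∈ Finset.range (n + 2), C (if k = n + 1 then a else b k) * P k
    rw [hsum, ← hb]
    ring

lemma ipS_C_mul_left (c M N t : ℝ) (f g : Polynomial ℝ) :
    ipS μ c M N (C t * f) g = t * ipS μ c M N f g := by
  unfold ipS
  rw [integral_C_mul_mul]
  simp only [Polynomial.derivative_C_mul, Polynomial.eval_mul, Polynomial.eval_C]
  ring

lemma ipS_sum_right (hmom : ∀ n : ℕ, Integrable (fun x : ℝ => x ^ n) μ)
    (c M N : ℝ) (f : Polynomial ℝ) (s : Finset ℕ)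
    (e : ℕ → ℝ) (g : ℕ → Polynomial ℝ) :
    ipS μ c M N f (∑ j ∈ s, C (e j) * g j) = ∑ j ∈ s, e j * ipS μ c M N f (g j) := by
  unfold ipS
  have h1 : ∫ x, f.eval x * (∑ j ∈ s, C (e j) * g j).eval x ∂μ
      = ∑ j ∈ s, e j * ∫ x, f.eval x * (g j).eval x ∂μ := by
    simp_rw [mul_comm (f.eval _)]
    rw [integral_sum_mul hmom]
    refine Finset.sum_congr rfl fun j hj => ?_
    rw [integral_C_mul_mul]
  rw [h1]
  simp only [Polynomial.eval_finset_sum, Polynomial.eval_mul, Polynomial.eval_C,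
    map_sum, Polynomial.derivative_C_mul]
  simp only [mul_add, Finset.mul_sum]
  rw [Finset.sum_add_distrib, Finset.sum_add_distrib]
  congr 1
  · congr 1
    refine Finset.sum_congr rfl fun j hj => by ring
  · refine Finset.sum_congr rfl fun j hj => by ring

end Aux

/-- for every `n ≥ 1`,
`s_n^{M,N}(x) = α_{n+1,n} p_{n+1}(x) + α_{n,n} p_n(x)
  - M s_n^{M,N}(c) K_{n+1}(x,c) - N (s_n^{M,N})'(c) K_{n+1}^{(0,1)}(x,c)`,
with `α_{n+1,n} = M s_n^{M,N}(c) p_{n+1}(c) + N (s_n^{M,N})'(c) p_{n+1}'(c)` and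
`α_{n,n} = t_n/r_n + M s_n^{M,N}(c) p_n(c) + N (s_n^{M,N})'(c) p_n'(c)`. -/
theorem stmt6
    (μ : Measure ℝ) [IsFiniteMeasure μ]
    (hmom : ∀ n : ℕ, Integrable (fun x : ℝ => x ^ n) μ)
    (hpos : ∀ q : Polynomial ℝ, q ≠ 0 → 0 < ∫ x, q.eval x ^ 2 ∂μ)
    (c : ℝ) (hc : ∀ᵐ x ∂μ, c < x)
    (P : ℕ → Polynomial ℝ) (hPm : ∀ n, (P n).Monic) (hPd : ∀ n, (P n).natDegree = n)
    (hPo : ∀ m n, m ≠ n → ∫ x, (P m).eval x * (P n).eval x ∂μ = 0)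
    (M N : ℝ) (hM : 0 ≤ M) (hN : 0 ≤ N)
    (S : ℕ → Polynomial ℝ) (hSm : ∀ n, (S n).Monic) (hSd : ∀ n, (S n).natDegree = n)
    (hSo : ∀ m n, m ≠ n → ipS μ c M N (S m) (S n) = 0) :
    ∀ n : ℕ, 1 ≤ n →
      sN μ c M N S n
        = C (M * (sN μ c M N S n).eval c * (onP μ P (n + 1)).eval c
              + N * (derivative (sN μ c M N S n)).eval c
                  * (derivative (onP μ P (n + 1))).eval c) * onP μ P (n + 1)
          + C (tC μ c M N S n / rC μ P n
              + M * (sN μ c M N S n).eval c * (onP μ P n).eval c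
              + N * (derivative (sN μ c M N S n)).eval c
                  * (derivative (onP μ P n)).eval c) * onP μ P n
          - C (M * (sN μ c M N S n).eval c) * Kpoly μ P c (n + 1) 0
          - C (N * (derivative (sN μ c M N S n)).eval c) * Kpoly μ P c (n + 1) 1 := by
  intro n hn
  set s : Polynomial ℝ := sN μ c M N S n with hs_def
  set t : ℝ := tC μ c M N S n with ht_def
  have hν : ∀ k, 0 < nrmSq μ (P k) := fun k => hpos (P k) (hPm k).ne_zero
  have hνne : ∀ k, nrmSq μ (P k) ≠ 0 := fun k => (hν k).ne'
  have hr2 : ∀ k, rC μ P k * rC μ P k = 1 / nrmSq μ (P k) := by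
    intro k
    unfold rC
    rw [div_mul_div_comm, one_mul, Real.mul_self_sqrt (hν k).le]
  have hrne : ∀ k, rC μ P k ≠ 0 := fun k =>
    one_div_ne_zero (Real.sqrt_pos.2 (hν k)).ne'
  -- degree of the remainder
  have hq_deg : (s - C t * P n).natDegree ≤ n - 1 := by
    apply Polynomial.natDegree_le_iff_coeff_eq_zero.2
    intro m hm
    have hmn : n ≤ m := by omega
    have hsc : s.coeff m = t * (S n).coeff m := by
      rw [hs_def]
      simp [sN, Polynomial.coeff_C_mul, ht_def]
    rcases eq_or_lt_of_le hmn with h | h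
    · have h1 : (S n).coeff m = 1 := by
        rw [← h]
        have := (hSm n).leadingCoeff
        rwa [Polynomial.leadingCoeff, hSd n] at this
      have h2 : (P n).coeff m = 1 := by
        rw [← h]
        have := (hPm n).leadingCoeff
        rwa [Polynomial.leadingCoeff, hPd n] at this
      simp [Polynomial.coeff_sub, Polynomial.coeff_C_mul, hsc, h1, h2]
    · have h1 : (S n).coeff m = 0 :=
        Polynomial.coeff_eq_zero_of_natDegree_lt (by rw [hSd]; exact h)
      have h2 : (P n).coeff m = 0 :=
        Polynomial.coeff_eq_zero_of_natDegree_lt (by rw [hPd]; exact h)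
      simp [Polynomial.coeff_sub, Polynomial.coeff_C_mul, hsc, h1, h2]
  obtain ⟨bv, hbv⟩ := span_mono P hPm hPd (n - 1) _ hq_deg
  rw [show n - 1 + 1 = n from by omega] at hbv
  have hs_exp : s = ∑ k ∈ Finset.range n, C (bv k) * P k + C t * P n := by
    rw [← hbv]; ring
  -- Sobolev orthogonality to lower degree polynomials
  have hSP : ∀ k, k < n → ipS μ c M N (S n) (P k) = 0 := by
    intro k hk
    obtain ⟨e, he⟩ := span_mono S hSm hSd k (P k) (le_of_eq (hPd k))
    rw [he, ipS_sum_right hmom]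
    refine Finset.sum_eq_zero fun j hj => ?_
    rw [hSo n j (by simp only [Finset.mem_range] at hj; omega), mul_zero]
  have hsP : ∀ k, k < n → ∫ x, s.eval x * (P k).eval x ∂μ
      = -(M * s.eval c * (P k).eval c
          + N * (derivative s).eval c * (derivative (P k)).eval c) := by
    intro k hk
    have h0 : ipS μ c M N s (P k) = 0 := by
      rw [hs_def, show sN μ c M N S n = C (tC μ c M N S n) * S n from rfl,
        ipS_C_mul_left, hSP k hk, mul_zero]
    unfold ipS at h0
    linear_combination h0
  -- the expansion coefficients
  have hbvk : ∀ k, k < n → bv k = -(M * s.eval c * (P k).eval c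
      + N * (derivative s).eval c * (derivative (P k)).eval c) / nrmSq μ (P k) := by
    intro k hk
    have h1 : ∫ x, (s - C t * P n).eval x * (P k).eval x ∂μ = bv k * nrmSq μ (P k) := by
      rw [hbv, integral_sum_mul hmom, Finset.sum_eq_single k]
      · rw [integral_C_mul_mul]
        congr 1
        unfold nrmSq
        exact integral_congr_ae (Filter.Eventually.of_forall fun x => (sq ((P k).eval x)).symm)
      · intro j hj hjk
        rw [integral_C_mul_mul, hPo j k hjk, mul_zero]
      · intro h
        exact absurd (Finset.mem_range.2 hk) h
    have h2 : ∫ x, (s - C t * P n).eval x * (P k).eval x ∂μ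
        = (∫ x, s.eval x * (P k).eval x ∂μ)
          - t * ∫ x, (P n).eval x * (P k).eval x ∂μ := by
      have e1 : ∀ x : ℝ, (s - C t * P n).eval x * (P k).eval x
          = s.eval x * (P k).eval x - t * ((P n).eval x * (P k).eval x) := by
        intro x
        simp only [Polynomial.eval_sub, Polynomial.eval_mul, Polynomial.eval_C]
        ring
      simp_rw [e1]
      rw [integral_sub (integrable_eval_mul hmom s (P k))
        ((integrable_eval_mul hmom (P n) (P k)).const_mul t), integral_const_mul]
    rw [h2, hPo n k (by omega), mul_zero, sub_zero, hsP k hk] at h1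
    rw [eq_div_iff (hνne k)]
    linear_combination -h1
  -- kernel splits
  have hK0 : Kpoly μ P c (n + 1) 0
      = (∑ k ∈ Finset.range n, C ((P k).eval c / nrmSq μ (P k)) * P k)
        + C ((P n).eval c / nrmSq μ (P n)) * P n
        + C ((P (n + 1)).eval c / nrmSq μ (P (n + 1))) * P (n + 1) := by
    unfold Kpoly
    simp only [Function.iterate_zero, id_eq]
    rw [Finset.sum_range_succ, Finset.sum_range_succ]
  have hK1 : Kpoly μ P c (n + 1) 1
      = (∑ k ∈ Finset.range n, C ((derivative (P k)).eval c / nrmSq μ (P k)) * P k)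
        + C ((derivative (P n)).eval c / nrmSq μ (P n)) * P n
        + C ((derivative (P (n + 1))).eval c / nrmSq μ (P (n + 1))) * P (n + 1) := by
    unfold Kpoly
    simp only [Function.iterate_one]
    rw [Finset.sum_range_succ, Finset.sum_range_succ]
  have hLHSsum : ∑ k ∈ Finset.range n, C (bv k) * P k
      = -(C (M * s.eval c) * ∑ k ∈ Finset.range n, C ((P k).eval c / nrmSq μ (P k)) * P k)
        - C (N * (derivative s).eval c)
            * ∑ k ∈ Finset.range n, C ((derivative (P k)).eval c / nrmSq μ (P k)) * P k := by
    rw [Finset.mul_sum, Finset.mul_sum, ← Finset.sum_neg_distrib, ← Finset.sum_sub_distrib]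
    refine Finset.sum_congr rfl fun k hk => ?_
    rw [hbvk k (Finset.mem_range.1 hk),
      show -(M * s.eval c * (P k).eval c
          + N * (derivative s).eval c * (derivative (P k)).eval c) / nrmSq μ (P k)
        = -(M * s.eval c * ((P k).eval c / nrmSq μ (P k)))
          - N * (derivative s).eval c * ((derivative (P k)).eval c / nrmSq μ (P k)) from by
        ring]
    simp only [map_sub, map_neg, map_mul]
    ring
  have key_top : (M * s.eval c * (rC μ P (n + 1) * (P (n + 1)).eval c)
        + N * (derivative s).eval c * (rC μ P (n + 1) * (derivative (P (n + 1))).eval c))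
          * rC μ P (n + 1)
      = M * s.eval c * ((P (n + 1)).eval c / nrmSq μ (P (n + 1)))
        + N * (derivative s).eval c
            * ((derivative (P (n + 1))).eval c / nrmSq μ (P (n + 1))) := by
    linear_combination (M * s.eval c * (P (n + 1)).eval c
      + N * (derivative s).eval c * (derivative (P (n + 1))).eval c) * hr2 (n + 1)
  have key_mid : (t / rC μ P n + M * s.eval c * (rC μ P n * (P n).eval c)
        + N * (derivative s).eval c * (rC μ P n * (derivative (P n)).eval c)) * rC μ P n
      = t + (M * s.eval c * ((P n).eval c / nrmSq μ (P n))
        + N * (derivative s).eval c * ((derivative (P n)).eval c / nrmSq μ (P n))) := by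
    rw [add_mul, add_mul, div_mul_cancel₀ t (hrne n), add_assoc]
    congr 1
    linear_combination (M * s.eval c * (P n).eval c
      + N * (derivative s).eval c * (derivative (P n)).eval c) * hr2 n
  have hCC : ∀ (x r : ℝ) (p : Polynomial ℝ), C x * (C r * p) = C (x * r) * p := by
    intro x r p
    rw [← mul_assoc, ← map_mul]
  conv_lhs => rw [hs_exp]
  rw [hK0, hK1, hLHSsum]
  simp only [onP, Polynomial.derivative_C_mul, Polynomial.eval_mul, Polynomial.eval_C]
  rw [hCC, hCC, key_top, key_mid]
  simp only [map_add, map_mul]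
  ring
end
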